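/- arXiv:1306.1935 — 2 statements merged into one kernel-verified Lean document; each statement's English description precedes it below -/
import Mathlib

section
/- Let B⁰_λ(S) be the Brandt λ⁰-extension of a monoid S with zero, equipped with a topology making it a Hausdorff semitopological semigroup. Then for every non-zero element (α,s,β) ∈ B⁰_λ(S) there is an open neighbourhood U of (α,s,β) contained in S*_{α,β} = {(α,t,β) : t ∈ S\{0_S}}. Consequently S*_{α,β} is open and S_{α,β} = S*_{α,β} ∪ {0} is closed in B⁰_λ(S) for all α, β ∈ λ. -/
open Topology Set Filter

/-- The underlying set of the Brandt `λ⁰`-extension `B⁰_λ(S)`: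
nonzero elements are triples `(α, s, β)` with `s ≠ 0`, and `none` is the zero. -/
abbrev Brandt (S : Type*) [Zero S] (lam : Type*) : Type _ :=
  Option (lam × {s : S // s ≠ 0} × lam)

open Classical in
/-- Multiplication of the Brandt `λ⁰`-extension. -/
noncomputable def brandtMul {S : Type*} [MonoidWithZero S] {lam : Type*} :
    Brandt S lam → Brandt S lam → Brandt S lam
  | some (α, a, β), some (γ, b, δ) =>
      if h : β = γ ∧ a.1 * b.1 ≠ 0 then some (α, ⟨a.1 * b.1, h.2⟩, δ) else none
  | _, _ => none

/-- The set `S*_{α,β}` of nonzero elements of the `(α,β)` sheet. -/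
def sheet {S : Type*} [Zero S] {lam : Type*} (α β : lam) : Set (Brandt S lam) :=
  {x | ∃ s : {s : S // s ≠ 0}, x = some (α, s, β)}

/-- The sheet `S_{α,β} = S*_{α,β} ∪ {0}`. -/
def sheet0 {S : Type*} [Zero S] {lam : Type*} (α β : lam) : Set (Brandt S lam) :=
  sheet α β ∪ {none}

/-- The trace `(U)*_{α,β}` of a subset `U ⊆ S` on the `(α,β)` sheet (zero removed). -/
def sheetTrace {S : Type*} [Zero S] {lam : Type*} (α β : lam) (U : Set S) :
    Set (Brandt S lam) :=
  {x | ∃ s : {s : S // s ≠ 0}, s.1 ∈ U ∧ x = some (α, s, β)}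

/-- The basic neighbourhood `U_A(0)` of zero: all sheets outside the finite set `A`
together with the traces of `U` on the sheets from `A`. -/
def UA0 {S : Type*} [Zero S] {lam : Type*} (A : Set (lam × lam)) (U : Set S) :
    Set (Brandt S lam) :=
  {x | x = none ∨ ∃ (α β : lam) (s : {s : S // s ≠ 0}),
        x = some (α, s, β) ∧ ((α, β) ∉ A ∨ s.1 ∈ U)}

/-- The canonical topology `τ_B^S` on the Brandt `λ⁰`-extension, generated by the base
consisting of traces of open subsets of `S` on the sheets and of the sets `U_A(0)`. -/
def brandtTop (S : Type*) [Zero S] [TopologicalSpace S] (lam : Type*) :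
    TopologicalSpace (Brandt S lam) :=
  TopologicalSpace.generateFrom
    ({W | ∃ (α β : lam) (U : Set S), IsOpen U ∧ W = sheetTrace α β U} ∪
     {W | ∃ A : Set (lam × lam), A.Finite ∧
        ∃ U : Set S, IsOpen U ∧ (0 : S) ∈ U ∧ W = UA0 A U})

open Classical in
/-- The canonical copy of `S` as the sheet `S_{α,α}` inside `B⁰_λ(S)`. -/
noncomputable def brandtIncl {S : Type*} [Zero S] {lam : Type*} (α : lam) (s : S) :
    Brandt S lam :=
  if h : s = 0 then none else some (α, ⟨s, h⟩, α)

/-- Separate continuity of a multiplication. -/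
def SepCont {X : Type*} [TopologicalSpace X] (m : X → X → X) : Prop :=
  ∀ t : X, Continuous (m t) ∧ Continuous (fun x => m x t)

/-- A family of subsets is locally finite. -/
def SetLocallyFinite {X : Type*} [TopologicalSpace X] (F : Set (Set X)) : Prop :=
  ∀ x : X, ∃ U : Set X, x ∈ U ∧ IsOpen U ∧ {A ∈ F | (A ∩ U).Nonempty}.Finite

/-- `X` is pseudocompact: every locally finite family of nonempty open subsets is finite. -/
def Pseudocompact (X : Type*) [TopologicalSpace X] : Prop :=
  ∀ F : Set (Set X), (∀ U ∈ F, IsOpen U ∧ U.Nonempty) → SetLocallyFinite F → F.Finite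

/-- `X` is countably pracompact: there is a dense set `A` such that every infinite
subset of `A` has an accumulation point in `X`. -/
def CountablyPracompact (X : Type*) [TopologicalSpace X] : Prop :=
  ∃ A : Set X, Dense A ∧ ∀ B ⊆ A, B.Infinite → ∃ x : X, AccPt x (𝓟 B)

/-- `X` is countably compact: every countable open cover has a finite subcover. -/
def CountablyCompactSp (X : Type*) [TopologicalSpace X] : Prop :=
  ∀ F : Set (Set X), F.Countable → (∀ U ∈ F, IsOpen U) → ⋃₀ F = univ →
    ∃ G ⊆ F, G.Finite ∧ ⋃₀ G = univ

/-!
With `e_α = (α, 1, α)`, the map `y ↦ e_α · y · e_β` is continuous by separate continuity,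
fixes `S_{α,β}` pointwise and sends everything else to `0`. Hence `S*_{α,β}` is the preimage of
the open set `B⁰_λ(S) \ {0}`, and `S_{α,β}` is the fixed-point set of a continuous self-map of a
Hausdorff space.
-/

section Algebra

variable {S lam : Type*} [MonoidWithZero S]

@[simp]
lemma brandtMul_none_left (y : Brandt S lam) : brandtMul none y = none := rfl

@[simp]
lemma brandtMul_none_right (y : Brandt S lam) : brandtMul y none = none := by
  cases y <;> rfl

lemma some_mem_sheet_iff {α β γ δ : lam} {s : {s : S // s ≠ 0}} :
    some (γ, s, δ) ∈ sheet α β ↔ γ = α ∧ δ = β := by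
  constructor
  · rintro ⟨t, ht⟩
    simp only [Option.some.injEq, Prod.mk.injEq] at ht
    exact ⟨ht.1, ht.2.2⟩
  · rintro ⟨rfl, rfl⟩
    exact ⟨s, rfl⟩

lemma sheet_eq_empty [Subsingleton S] (α β : lam) : sheet (S := S) α β = ∅ :=
  eq_empty_of_forall_notMem fun _ ⟨s, _⟩ => s.2 (Subsingleton.elim _ _)

variable [Nontrivial S]

def brandtUnit (α : lam) : Brandt S lam := some (α, ⟨1, one_ne_zero⟩, α)

noncomputable def sheetRetraction (α β : lam) (y : Brandt S lam) : Brandt S lam :=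
  brandtMul (brandtMul (brandtUnit α) y) (brandtUnit β)

@[simp]
lemma sheetRetraction_none (α β : lam) : sheetRetraction α β (none : Brandt S lam) = none := by
  simp only [sheetRetraction, brandtMul_none_right, brandtMul_none_left]

lemma sheetRetraction_some_self (α β : lam) (b : {s : S // s ≠ 0}) :
    sheetRetraction α β (some (α, b, β)) = some (α, b, β) := by
  simp [sheetRetraction, brandtUnit, brandtMul, b.2]

lemma sheetRetraction_some_of_not {α β γ δ : lam} (h : ¬(γ = α ∧ δ = β))
    (b : {s : S // s ≠ 0}) : sheetRetraction α β (some (γ, b, δ)) = none := by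
  by_cases hγ : γ = α
  · subst hγ
    have hδ : δ ≠ β := fun hδ => h ⟨rfl, hδ⟩
    simp [sheetRetraction, brandtUnit, brandtMul, b.2, hδ]
  · simp [sheetRetraction, brandtUnit, brandtMul, Ne.symm hγ]

lemma sheetRetraction_ne_none_iff {α β : lam} {y : Brandt S lam} :
    sheetRetraction α β y ≠ none ↔ y ∈ sheet α β := by
  rcases y with _ | ⟨γ, b, δ⟩
  · simp [sheet]
  · rw [some_mem_sheet_iff]
    by_cases h : γ = α ∧ δ = β
    · obtain ⟨rfl, rfl⟩ := h
      simp [sheetRetraction_some_self]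
    · simp [sheetRetraction_some_of_not h, h]

lemma sheetRetraction_eq_self_iff {α β : lam} {y : Brandt S lam} :
    sheetRetraction α β y = y ↔ y ∈ sheet0 α β := by
  rcases y with _ | ⟨γ, b, δ⟩
  · simp [sheet0]
  · rw [sheet0, mem_union, some_mem_sheet_iff]
    by_cases h : γ = α ∧ δ = β
    · obtain ⟨rfl, rfl⟩ := h
      simp [sheetRetraction_some_self]
    · simp [sheetRetraction_some_of_not h, h]

end Algebra

section Topology

variable {S lam : Type*} [MonoidWithZero S] [TopologicalSpace (Brandt S lam)]

lemma continuous_sheetRetraction [Nontrivial S]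
    (hsep : SepCont (brandtMul (S := S) (lam := lam))) (α β : lam) :
    Continuous (sheetRetraction (S := S) α β) :=
  (hsep (brandtUnit β)).2.comp (hsep (brandtUnit α)).1

theorem isOpen_sheet [T1Space (Brandt S lam)]
    (hsep : SepCont (brandtMul (S := S) (lam := lam))) (α β : lam) :
    IsOpen (sheet (S := S) α β) := by
  rcases subsingleton_or_nontrivial S with hS | hS
  · simp [sheet_eq_empty]
  · have : sheet (S := S) α β = sheetRetraction α β ⁻¹' {none}ᶜ :=
      ext fun _ => sheetRetraction_ne_none_iff.symm
    rw [this]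
    exact isClosed_singleton.isOpen_compl.preimage (continuous_sheetRetraction hsep α β)

theorem isClosed_sheet0 [T2Space (Brandt S lam)]
    (hsep : SepCont (brandtMul (S := S) (lam := lam))) (α β : lam) :
    IsClosed (sheet0 (S := S) α β) := by
  rcases subsingleton_or_nontrivial S with hS | hS
  · simp [sheet0, sheet_eq_empty]
  · have : sheet0 (S := S) α β = {y | sheetRetraction α β y = y} :=
      ext fun _ => sheetRetraction_eq_self_iff.symm
    rw [this]
    exact isClosed_eq (continuous_sheetRetraction hsep α β) continuous_id

end Topology

/-- In a Hausdorff semitopological Brandt extension, every nonzero point has an open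
neighbourhood inside its sheet `S*_{α,β}`; hence `S*_{α,β}` is open and
`S_{α,β} = S*_{α,β} ∪ {0}` is closed. -/
theorem brandt_sheet_open_closed {S lam : Type*} [MonoidWithZero S]
    [tB : TopologicalSpace (Brandt S lam)] [T2Space (Brandt S lam)]
    (hsep : SepCont (brandtMul (S := S) (lam := lam))) :
    (∀ (α β : lam) (s : {s : S // s ≠ 0}),
      ∃ U : Set (Brandt S lam), IsOpen U ∧ some (α, s, β) ∈ U ∧ U ⊆ sheet α β) ∧
    (∀ α β : lam, IsOpen (sheet (S := S) α β) ∧ IsClosed (sheet0 (S := S) α β)) :=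
  ⟨fun α β s => ⟨sheet α β, isOpen_sheet hsep α β, ⟨s, rfl⟩, subset_rfl⟩,
    fun α β => ⟨isOpen_sheet hsep α β, isClosed_sheet0 hsep α β⟩⟩
end

section
/- With the topology τ_B^S on the Brandt λ⁰-extension B⁰_λ(S) of a Hausdorff semitopological monoid S with zero (nonzero part a disjoint sum of copies of S\{0_S}; neighbourhoods of zero given by U_A(0) = ⋃_{(α,β)∉A} S_{α,β} ∪ ⋃_{(γ,δ)∈A} (U(0_S))_{γ,δ} for finite A), the space (B⁰_λ(S), τ_B^S) is normal if and only if S is normal. -/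
open Topology Set Filter

/-!
A closed set `H` of `B⁰_λ(S)` missing `0` lies in finitely many sheets, because its complement
is a neighbourhood of `0`, which by the definition of `τ_B^S` contains all but finitely many
sheets. Hence, given disjoint closed `H` and `K` with `0 ∉ H`, it suffices to separate the
traces of `H` and `K ∪ {0}` on each of those finitely many sheets in `S`; transporting the
separating sets back along the closed embeddings of the sheets gives open sets separating `H`
and `K`. Conversely, `S` is a closed subspace of `B⁰_λ(S)`, as is any sheet.
-/

attribute [local instance] brandtTop

namespace Brandt

variable {S lam : Type*} [Zero S]

open Classical in
noncomputable def sheetIncl (p : lam × lam) (s : S) : Brandt S lam :=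
  if h : s = 0 then none else some (p.1, ⟨s, h⟩, p.2)

variable {p q : lam × lam} {s t : S}

@[simp]
lemma sheetIncl_zero (p : lam × lam) : sheetIncl p (0 : S) = none := dif_pos rfl

lemma sheetIncl_of_ne_zero (h : s ≠ 0) : sheetIncl p s = some (p.1, ⟨s, h⟩, p.2) := dif_neg h

@[simp]
lemma sheetIncl_coe (a b : lam) (s : {s : S // s ≠ 0}) : sheetIncl (a, b) s.1 = some (a, s, b) :=
  sheetIncl_of_ne_zero s.2

@[simp]
lemma sheetIncl_eq_none_iff : sheetIncl p s = none ↔ s = 0 := by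
  by_cases h : s = 0 <;> simp [sheetIncl, h]

lemma sheetIncl_eq_sheetIncl_iff :
    sheetIncl p s = sheetIncl q t ↔ s = 0 ∧ t = 0 ∨ p = q ∧ s = t := by
  by_cases hs : s = 0 <;> by_cases ht : t = 0 <;>
    simp [sheetIncl, hs, ht, Prod.ext_iff] <;> grind

lemma sheetIncl_injective (p : lam × lam) : Function.Injective (sheetIncl (S := S) p) := by
  intro s t h
  rcases sheetIncl_eq_sheetIncl_iff.mp h with ⟨rfl, rfl⟩ | ⟨-, rfl⟩ <;> rfl

lemma exists_sheetIncl_eq {x : Brandt S lam} (hx : x ≠ none) : ∃ p s, sheetIncl p s = x := by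
  obtain _ | ⟨a, s, b⟩ := x
  · exact absurd rfl hx
  · exact ⟨(a, b), s.1, sheetIncl_coe a b s⟩

lemma preimage_sheetIncl_image_of_ne (h : q ≠ p) (C : Set S) :
    sheetIncl q ⁻¹' (sheetIncl p '' C) = C ∩ {0} := by
  ext s
  simp only [mem_preimage, mem_image, sheetIncl_eq_sheetIncl_iff, h.symm, false_and, or_false,
    mem_inter_iff, mem_singleton_iff]
  exact ⟨fun ⟨t, ht, ht0, hs⟩ => ⟨hs ▸ ht0 ▸ ht, hs⟩, fun ⟨hs, hs0⟩ => ⟨s, hs, hs0, hs0⟩⟩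

lemma sheetTrace_eq_image (a b : lam) (U : Set S) :
    sheetTrace a b U = sheetIncl (a, b) '' (U \ {0}) := by
  ext x
  constructor
  · rintro ⟨s, hs, rfl⟩
    exact ⟨s.1, ⟨hs, s.2⟩, sheetIncl_coe a b s⟩
  · rintro ⟨s, ⟨hs, hs0⟩, rfl⟩
    exact ⟨⟨s, hs0⟩, hs, sheetIncl_of_ne_zero hs0⟩

lemma sheetIncl_mem_UA0_iff {A : Set (lam × lam)} {U : Set S} :
    sheetIncl p s ∈ UA0 A U ↔ s = 0 ∨ p ∉ A ∨ s ∈ U := by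
  by_cases hs : s = 0
  · simp [hs, UA0]
  · simp [sheetIncl_of_ne_zero hs, UA0, hs]

variable [TopologicalSpace S]

lemma isOpen_image_sheetIncl {U : Set S} (hU : IsOpen U) (h0 : (0 : S) ∉ U) :
    IsOpen (sheetIncl (lam := lam) p '' U) := by
  rw [← sdiff_singleton_eq_self h0, ← sheetTrace_eq_image]
  exact TopologicalSpace.isOpen_generateFrom_of_mem (Or.inl ⟨p.1, p.2, U, hU, rfl⟩)

lemma isOpen_UA0 {A : Set (lam × lam)} (hA : A.Finite) {U : Set S} (hU : IsOpen U)
    (h0 : (0 : S) ∈ U) : IsOpen (UA0 A U) :=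
  TopologicalSpace.isOpen_generateFrom_of_mem (Or.inr ⟨A, hA, U, hU, h0, rfl⟩)

lemma exists_finite_forall_range_sheetIncl_subset {O : Set (Brandt S lam)} (hO : IsOpen O)
    (h0 : none ∈ O) : ∃ A : Set (lam × lam), A.Finite ∧ ∀ p ∉ A, range (sheetIncl p) ⊆ O := by
  induction hO with
  | basic W hW =>
    rcases hW with ⟨a, b, U, -, rfl⟩ | ⟨A, hA, U, -, -, rfl⟩
    · obtain ⟨s, -, h⟩ := h0
      cases h
    · exact ⟨A, hA, fun p hp _ ⟨s, hs⟩ => hs ▸ sheetIncl_mem_UA0_iff.mpr (Or.inr (Or.inl hp))⟩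
  | univ => exact ⟨∅, finite_empty, fun _ _ => subset_univ _⟩
  | inter O₁ O₂ _ _ ih₁ ih₂ =>
    obtain ⟨A₁, hA₁, h₁⟩ := ih₁ h0.1
    obtain ⟨A₂, hA₂, h₂⟩ := ih₂ h0.2
    exact ⟨A₁ ∪ A₂, hA₁.union hA₂, fun p hp =>
      subset_inter (h₁ p fun h => hp (Or.inl h)) (h₂ p fun h => hp (Or.inr h))⟩
  | sUnion F _ ih =>
    obtain ⟨W, hWF, hW⟩ := h0
    obtain ⟨A, hA, h⟩ := ih W hWF hW
    exact ⟨A, hA, fun p hp => (h p hp).trans (subset_sUnion_of_mem hWF)⟩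

variable [T1Space S]

lemma continuous_sheetIncl (p : lam × lam) : Continuous (sheetIncl (S := S) p) := by
  refine continuous_generateFrom_iff.mpr ?_
  rintro W (⟨a, b, U, hU, rfl⟩ | ⟨A, -, U, hU, h0, rfl⟩)
  · rw [sheetTrace_eq_image]
    by_cases hp : p = (a, b)
    · rw [hp, (sheetIncl_injective _).preimage_image]
      exact hU.sdiff isClosed_singleton
    · rw [preimage_sheetIncl_image_of_ne hp, sdiff_inter_self]
      exact isOpen_empty
  · have : sheetIncl p ⁻¹' UA0 A U = {s | p ∉ A ∨ s ∈ U} := by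
      ext s
      simp only [mem_preimage, sheetIncl_mem_UA0_iff, mem_ofPred_eq, or_iff_right_iff_imp]
      rintro rfl
      exact Or.inr h0
    by_cases hp : p ∈ A <;> simp [this, hp, hU]

lemma isOpen_of_forall_isOpen_preimage_sheetIncl {O : Set (Brandt S lam)}
    (hpre : ∀ p, IsOpen (sheetIncl p ⁻¹' O))
    (h0 : none ∈ O → ∃ A : Set (lam × lam), A.Finite ∧ ∀ p ∉ A, range (sheetIncl p) ⊆ O) :
    IsOpen O := by
  refine isOpen_iff_forall_mem_open.mpr fun x hx => ?_
  by_cases hx0 : x = none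
  · subst hx0
    obtain ⟨A, hA, hAO⟩ := h0 hx
    have h0U : (0 : S) ∈ ⋂ p ∈ A, sheetIncl p ⁻¹' O := mem_iInter₂.mpr fun _ _ => by simpa
    refine ⟨UA0 A (⋂ p ∈ A, sheetIncl p ⁻¹' O), ?_,
      isOpen_UA0 hA (hA.isOpen_biInter fun p _ => hpre p) h0U, Or.inl rfl⟩
    rintro y (rfl | ⟨a, b, s, rfl, hs⟩)
    · exact hx
    · rw [← sheetIncl_coe]
      by_cases hab : (a, b) ∈ A
      · exact mem_iInter₂.mp (hs.resolve_left (not_not.mpr hab)) _ hab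
      · exact hAO _ hab (mem_range_self _)
  · obtain ⟨p, s, rfl⟩ := exists_sheetIncl_eq hx0
    refine ⟨sheetIncl p '' (sheetIncl p ⁻¹' O \ {0}), by simp [image_subset_iff],
      isOpen_image_sheetIncl ((hpre p).sdiff isClosed_singleton) (by simp), s,
      ⟨hx, fun h => hx0 (by simpa using h)⟩, rfl⟩

lemma isClosed_image_sheetIncl {C : Set S} (hC : IsClosed C) :
    IsClosed (sheetIncl (lam := lam) p '' C) := by
  rw [← isOpen_compl_iff]
  refine isOpen_of_forall_isOpen_preimage_sheetIncl (fun q => ?_)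
    fun h0 => ⟨{p}, finite_singleton p, fun q hq => ?_⟩
  · rw [preimage_compl, isOpen_compl_iff]
    by_cases hq : q = p
    · rwa [hq, (sheetIncl_injective p).preimage_image]
    · rw [preimage_sheetIncl_image_of_ne hq]
      exact hC.inter isClosed_singleton
  · rintro _ ⟨s, rfl⟩ ⟨c, hc, he⟩
    rcases sheetIncl_eq_sheetIncl_iff.mp he with ⟨rfl, rfl⟩ | ⟨rfl, -⟩
    · exact h0 ⟨0, hc, sheetIncl_zero p⟩
    · exact hq rfl

lemma isClosedEmbedding_sheetIncl (p : lam × lam) : IsClosedEmbedding (sheetIncl (S := S) p) :=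
  .of_continuous_injective_isClosedMap (continuous_sheetIncl p) (sheetIncl_injective p)
    fun _ hC => isClosed_image_sheetIncl hC

lemma separatedNhds_of_none_notMem [NormalSpace S] {H K : Set (Brandt S lam)} (hH : IsClosed H)
    (hK : IsClosed K) (hHK : Disjoint H K) (h0 : none ∉ H) : SeparatedNhds H K := by
  obtain ⟨A, hA, hAH⟩ := exists_finite_forall_range_sheetIncl_subset hH.isOpen_compl h0
  -- Putting `0` on the side of `K` keeps it out of every `u p`, so `sheetIncl p '' u p` is open.
  have hsep : ∀ p : lam × lam, SeparatedNhds (sheetIncl p ⁻¹' H) (sheetIncl p ⁻¹' K ∪ {0}) :=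
    fun p => NormalSpace.normal _ _ (hH.preimage (continuous_sheetIncl p))
      ((hK.preimage (continuous_sheetIncl p)).union isClosed_singleton)
      (disjoint_union_right.mpr ⟨hHK.preimage _, disjoint_singleton_right.mpr (by simpa)⟩)
  choose u v hu hv hHu hKv huv using hsep
  have hu0 : ∀ p, (0 : S) ∉ u p := fun p h => disjoint_left.mp (huv p) h (hKv p (Or.inr rfl))
  refine ⟨⋃ p ∈ A, sheetIncl p '' u p, ⋂ p ∈ A, (sheetIncl p '' (v p)ᶜ)ᶜ,
    isOpen_biUnion fun p _ => isOpen_image_sheetIncl (hu p) (hu0 p),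
    hA.isOpen_biInter fun p _ => (isClosed_image_sheetIncl (hv p).isClosed_compl).isOpen_compl,
    fun x hx => ?_, fun x hx => ?_, ?_⟩
  · obtain ⟨p, s, rfl⟩ := exists_sheetIncl_eq (ne_of_mem_of_not_mem hx h0)
    have hp : p ∈ A := by_contra fun hp => hAH p hp (mem_range_self s) hx
    exact mem_biUnion hp ⟨s, hHu p hx, rfl⟩
  · refine mem_iInter₂.mpr fun p _ ⟨s, hs, hsx⟩ => hs (hKv p (Or.inl ?_))
    rwa [mem_preimage, hsx]
  · refine disjoint_left.mpr fun x hx hx' => ?_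
    obtain ⟨p, hp, s, hs, rfl⟩ := mem_iUnion₂.mp hx
    exact disjoint_left.mp (huv p) hs (not_not.mp fun h => mem_iInter₂.mp hx' p hp ⟨s, h, rfl⟩)

lemma normalSpace [NormalSpace S] : NormalSpace (Brandt S lam) := by
  refine ⟨fun H K hH hK hHK => ?_⟩
  by_cases h0 : none ∈ H
  · exact (separatedNhds_of_none_notMem hK hH hHK.symm (disjoint_left.mp hHK h0)).symm
  · exact separatedNhds_of_none_notMem hH hK hHK h0

end Brandt

theorem brandt_normal_iff_general {S lam : Type*} [MonoidWithZero S] [TopologicalSpace S]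
    [T2Space S] [Nonempty lam] :
    @NormalSpace (Brandt S lam) (brandtTop S lam) ↔ NormalSpace S := by
  refine ⟨fun _ => ?_, fun _ => Brandt.normalSpace⟩
  obtain ⟨α⟩ := ‹Nonempty lam›
  exact (Brandt.isClosedEmbedding_sheetIncl (α, α)).normalSpace

/-- The canonical Brandt extension topology `τ_B^S` is normal iff `S` is normal. -/
theorem brandt_normal_iff {S lam : Type*} [MonoidWithZero S] [TopologicalSpace S]
    [T2Space S] [Nonempty lam] (hsep : SepCont (fun x y : S => x * y)) :
    @NormalSpace (Brandt S lam) (brandtTop S lam) ↔ NormalSpace S :=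
  brandt_normal_iff_general
end
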